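/- arXiv:1711.00388 — 8 statements merged into one kernel-verified Lean document; each statement's English description precedes it below -/
import Mathlib

section
/- Let m ≥ 1 and let D be a semi-uniform probability measure on the disjoint union X of measurable spaces X_1,…,X_m. Let P be a composition of m additive properties on X, let d ≥ 0 and t > 0 be real numbers, and let α ∈ [0,1]. Then P^t_D(d,α) ⊆ P_D(d,α) ⊆ P^t_D(d, α + d/(t·m)). -/
open MeasureTheory ENNReal

/-- Distance between two Boolean functions with respect to a measure `D`:
the measure of the set where they disagree. -/
noncomputable def distD {α : Type*} [MeasurableSpace α] (D : Measure α) (f g : α → Bool) : ℝ :=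
  (D {x | f x ≠ g x}).toReal

/-- The composition class `P(d)` of the additive properties `C i k`. -/
def compClass {m : ℕ} {X : Fin m → Type*} [∀ i, MeasurableSpace (X i)]
    (C : (i : Fin m) → ℕ → Set (X i → Bool)) (d : ℝ) : Set ((Σ i, X i) → Bool) :=
  {f | Measurable f ∧ ∃ k : Fin m → ℕ,
    (∑ i, (k i : ℝ)) ≤ d ∧ ∀ i, (fun x => f ⟨i, x⟩) ∈ C i (k i)}

/-- The truncated composition class `P^t(d)`. -/
def compClassT {m : ℕ} {X : Fin m → Type*} [∀ i, MeasurableSpace (X i)]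
    (C : (i : Fin m) → ℕ → Set (X i → Bool)) (t d : ℝ) : Set ((Σ i, X i) → Bool) :=
  {f | Measurable f ∧ ∃ k : Fin m → ℕ,
    (∑ i, (k i : ℝ)) ≤ d ∧ (∀ i, (k i : ℝ) ≤ t) ∧ ∀ i, (fun x => f ⟨i, x⟩) ∈ C i (k i)}

/-- `P_D(d, α)`: measurable functions `α`-close to `P(d)` w.r.t. `D`. -/
noncomputable def compClose {m : ℕ} {X : Fin m → Type*} [∀ i, MeasurableSpace (X i)]
    (C : (i : Fin m) → ℕ → Set (X i → Bool)) (D : Measure (Σ i, X i)) (d α : ℝ) :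
    Set ((Σ i, X i) → Bool) :=
  {f | Measurable f ∧ ∃ g ∈ compClass C d, distD D f g ≤ α}

/-- `P^t_D(d, α)`: measurable functions `α`-close to `P^t(d)` w.r.t. `D`. -/
noncomputable def compCloseT {m : ℕ} {X : Fin m → Type*} [∀ i, MeasurableSpace (X i)]
    (C : (i : Fin m) → ℕ → Set (X i → Bool)) (D : Measure (Σ i, X i)) (t d α : ℝ) :
    Set ((Σ i, X i) → Bool) :=
  {f | Measurable f ∧ ∃ g ∈ compClassT C t d, distD D f g ≤ α}

lemma measurable_of_sigma {ι : Type*} {β : ι → Type*} [∀ i, MeasurableSpace (β i)]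
    {γ : Type*} [MeasurableSpace γ] {f : Sigma β → γ}
    (h : ∀ i, Measurable fun b => f ⟨i, b⟩) : Measurable f := by
  intro s hs
  refine MeasurableSpace.measurableSet_iInf.2 fun i => ?_
  exact h i hs

/-- Lemma 3.1 (truncation): on a semi-uniform distribution,
`P^t_D(d,α) ⊆ P_D(d,α) ⊆ P^t_D(d, α + d/(t·m))`. -/
theorem truncation_lemma {m : ℕ} (hm : 1 ≤ m) (X : Fin m → Type*) [∀ i, MeasurableSpace (X i)]
    (D : Measure (Σ i, X i)) [IsProbabilityMeasure D]
    (hsemi : ∀ i : Fin m, D {x : Σ i, X i | x.1 = i} = 1 / m)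
    (C : (i : Fin m) → ℕ → Set (X i → Bool))
    (hC0 : ∀ i, (C i 0).Nonempty)
    (hCmeas : ∀ i k, ∀ g ∈ C i k, Measurable g)
    (d t α : ℝ) (hd : 0 ≤ d) (ht : 0 < t) (hα : α ∈ Set.Icc (0 : ℝ) 1) :
    compCloseT C D t d α ⊆ compClose C D d α ∧
      compClose C D d α ⊆ compCloseT C D t d (α + d / (t * m)) := by

  constructor
  · rintro f ⟨hf, g, ⟨hg, k, hsum, -, hmem⟩, hdist⟩
    exact ⟨hf, g, ⟨hg, k, hsum, hmem⟩, hdist⟩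
  · rintro f ⟨hf, g, ⟨hg, k, hsum, hmem⟩, hdist⟩
    choose h hh using hC0
    have hmpos : (0:ℝ) < m := by exact_mod_cast hm
    set g' : (Σ i, X i) → Bool := fun p => if t < (k p.1 : ℝ) then h p.1 p.2 else g p with hg'
    set k' : Fin m → ℕ := fun i => if t < (k i : ℝ) then 0 else k i with hk'
    have hg'i : ∀ i : Fin m, (fun x => g' ⟨i, x⟩) ∈ C i (k' i) := by
      intro i
      by_cases hi : t < (k i : ℝ)
      · simpa [hg', hk', hi] using hh i
      · simpa [hg', hk', hi] using hmem i
    have hg'meas : Measurable g' := by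
      refine measurable_of_sigma fun i => ?_
      exact hCmeas i (k' i) _ (hg'i i)
    set S : Finset (Fin m) := Finset.univ.filter (fun i => t < (k i : ℝ)) with hS
    -- cardinality bound
    have hcard : (S.card : ℝ) * t ≤ d := by
      calc (S.card : ℝ) * t = ∑ _i ∈ S, t := by rw [Finset.sum_const, nsmul_eq_mul]
        _ ≤ ∑ i ∈ S, (k i : ℝ) := Finset.sum_le_sum fun i hi => le_of_lt (by
            simpa [hS] using (Finset.mem_filter.1 hi).2)
        _ ≤ ∑ i, (k i : ℝ) := Finset.sum_le_sum_of_subset_of_nonneg (Finset.subset_univ S)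
            (fun i _ _ => by positivity)
        _ ≤ d := hsum
    -- measure of disagreement of g and g'
    have hsub : {p : Σ i, X i | g p ≠ g' p} ⊆ ⋃ i ∈ S, {p : Σ i, X i | p.1 = i} := by
      intro p hp
      simp only [Set.mem_iUnion, Set.mem_setOf_eq]
      refine ⟨p.1, ?_, rfl⟩
      simp only [hS, Finset.mem_filter, Finset.mem_univ, true_and]
      by_contra hc
      exact hp (by simp [hg', hc])
    have hDgg' : distD D g g' ≤ (S.card : ℝ) / m := by
      have h1 : D {p : Σ i, X i | g p ≠ g' p} ≤ ∑ i ∈ S, D {p : Σ i, X i | p.1 = i} :=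
        le_trans (measure_mono hsub) (measure_biUnion_finset_le S _)
      have h2 : (∑ i ∈ S, D {p : Σ i, X i | p.1 = i}) = S.card * (1 / m : ℝ≥0∞) := by
        simp [hsemi, Finset.sum_const]
      rw [h2] at h1
      have hne : ((S.card : ℝ≥0∞) * (1 / m)) ≠ ⊤ := by
        refine ENNReal.mul_ne_top (by simp) ?_
        simp [ENNReal.div_eq_top]
        omega
      calc distD D g g' ≤ ((S.card : ℝ≥0∞) * (1 / m)).toReal := ENNReal.toReal_mono hne h1
        _ = (S.card : ℝ) / m := by
          rw [ENNReal.toReal_mul, ENNReal.toReal_div]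
          simp [div_eq_mul_inv]
    have hfrac : (S.card : ℝ) / m ≤ d / (t * m) := by
      rw [div_le_div_iff₀ hmpos (by positivity)]
      calc (S.card : ℝ) * (t * m) = ((S.card : ℝ) * t) * m := by ring
        _ ≤ d * m := by nlinarith
    -- triangle inequality
    have htri : distD D f g' ≤ distD D f g + distD D g g' := by
      have hsub2 : {p : Σ i, X i | f p ≠ g' p} ⊆
          {p : Σ i, X i | f p ≠ g p} ∪ {p : Σ i, X i | g p ≠ g' p} := by
        intro p hp
        by_cases hfg : f p = g p
        · right; simp only [Set.mem_setOf_eq]; rw [← hfg]; exact hp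
        · left; exact hfg
      have h1 : D {p : Σ i, X i | f p ≠ g' p} ≤
          D {p : Σ i, X i | f p ≠ g p} + D {p : Σ i, X i | g p ≠ g' p} :=
        le_trans (measure_mono hsub2) (measure_union_le _ _)
      unfold distD
      rw [← ENNReal.toReal_add (measure_ne_top D _) (measure_ne_top D _)]
      exact ENNReal.toReal_mono (by finiteness) h1
    refine ⟨hf, g', ⟨hg'meas, k', ?_, ?_, hg'i⟩, ?_⟩
    · refine le_trans (Finset.sum_le_sum fun i _ => ?_) hsum
      by_cases hi : t < (k i : ℝ) <;> simp [hk', hi]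
    · intro i
      by_cases hi : t < (k i : ℝ) <;> simp [hk', hi, ht.le]
      exact le_of_not_gt hi
    · calc distD D f g' ≤ distD D f g + distD D g g' := htri
        _ ≤ α + (S.card : ℝ) / m := add_le_add hdist hDgg'
        _ ≤ α + d / (t * m) := by linarith
end

section
/- Let ε ∈ (0, 1/2), α ∈ [0,1], and let d be a natural number with d > 2/ε. Let d' be a natural number with d' ≤ (1 + ε/2)·d. Let f : ℝ → {0,1} be measurable. If there exists a measurable g : ℝ → {0,1} that is a union of at most d' intervals with dist(f,g) ≤ α − ε, then there exists a measurable h : ℝ → {0,1} that is a union of at most d intervals with dist(f,h) ≤ α. (In the paper's notation: I((1+ε/2)d, α−ε) ⊆ I(d, α) with respect to the uniform distribution on [0,1].) -/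
open MeasureTheory

/-- `A` is a union of at most `d` intervals of `ℝ` (an interval being an
order-convex subset of `ℝ`; intervals may be empty, giving "at most"). -/
def IsUnionIntervals (d : ℕ) (A : Set ℝ) : Prop :=
  ∃ I : Fin d → Set ℝ, (∀ i, (I i).OrdConnected) ∧ A = ⋃ i, I i

/-- Distance between two Boolean functions on `ℝ` with respect to the uniform
distribution on `[0,1]`: the Lebesgue measure of the set of points of `[0,1]`
where they disagree. -/
noncomputable def distUnif (f g : ℝ → Bool) : ℝ :=
  (volume {x ∈ Set.Icc (0 : ℝ) 1 | f x ≠ g x}).toReal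


lemma exists_small (n : ℕ) (I : Fin (n+1) → Set ℝ) (hI : ∀ i, (I i).OrdConnected) :
    ∃ i : Fin (n+1),
      (volume ((I i ∩ Set.Icc (0:ℝ) 1) \ ⋃ j ∈ ({i}ᶜ : Set (Fin (n+1))), I j)).toReal
        ≤ ((n:ℝ)+1)⁻¹ := by
  classical
  set E : Fin (n+1) → Set ℝ :=
    fun i => (I i ∩ Set.Icc (0:ℝ) 1) \ ⋃ j ∈ ({i}ᶜ : Set (Fin (n+1))), I j with hE
  have hmeas : ∀ i, MeasurableSet (E i) := fun i =>
    (((hI i).measurableSet.inter measurableSet_Icc)).diff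
      (MeasurableSet.biUnion (Set.to_countable _) fun j _ => (hI j).measurableSet)
  have hdisj : Set.PairwiseDisjoint (↑(Finset.univ : Finset (Fin (n+1)))) E := by
    intro i _ j _ hij
    refine Set.disjoint_left.2 fun x hxi hxj => ?_
    have h1 : x ∉ ⋃ k ∈ ({i}ᶜ : Set (Fin (n+1))), I k := hxi.2
    have h2 : x ∈ I j := hxj.1.1
    exact h1 (Set.mem_biUnion (by simpa using hij.symm) h2)
  have hsum : ∑ i, volume (E i) ≤ 1 := by
    rw [← measure_biUnion_finset hdisj fun i _ => hmeas i]
    calc volume (⋃ i ∈ Finset.univ, E i) ≤ volume (Set.Icc (0:ℝ) 1) := by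
          apply measure_mono
          intro x hx
          simp only [Set.mem_iUnion] at hx
          obtain ⟨i, -, hx⟩ := hx
          exact hx.1.2
      _ = 1 := by simp
  have hfin : ∀ i, volume (E i) ≠ ⊤ := by
    intro i
    have : volume (E i) ≤ 1 := le_trans (Finset.single_le_sum (f := fun i => volume (E i))
      (fun i _ => zero_le) (Finset.mem_univ i)) hsum
    exact (lt_of_le_of_lt this (by norm_num)).ne
  have hsumR : ∑ i, (volume (E i)).toReal ≤ 1 := by
    rw [← ENNReal.toReal_sum (fun i _ => hfin i)]
    exact ENNReal.toReal_mono (by norm_num) hsum |>.trans (by norm_num)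
  have := Finset.exists_le_of_sum_le (s := (Finset.univ : Finset (Fin (n+1))))
    (f := fun i => (volume (E i)).toReal) (g := fun _ => ((n:ℝ)+1)⁻¹)
    Finset.univ_nonempty ?_
  · obtain ⟨i, -, hi⟩ := this
    exact ⟨i, hi⟩
  · rw [Finset.sum_const, Finset.card_univ, Fintype.card_fin]
    calc ∑ i, (volume (E i)).toReal ≤ 1 := hsumR
      _ ≤ (n+1) • ((n:ℝ)+1)⁻¹ := by
          rw [nsmul_eq_mul]
          push_cast
          rw [mul_inv_cancel₀]
          positivity



lemma vol_mono_icc {S T : Set ℝ} (h : S ⊆ T) (hT : T ⊆ Set.Icc 0 1) :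
    (volume S).toReal ≤ (volume T).toReal := by
  apply ENNReal.toReal_mono _ (measure_mono h)
  exact (lt_of_le_of_lt (measure_mono hT) (by simp [lt_top_iff_ne_top])).ne

lemma vol_union_icc {S S1 S2 : Set ℝ} (h : S ⊆ S1 ∪ S2) (h1 : S1 ⊆ Set.Icc 0 1)
    (h2 : S2 ⊆ Set.Icc 0 1) :
    (volume S).toReal ≤ (volume S1).toReal + (volume S2).toReal := by
  have hf1 : volume S1 ≠ ⊤ :=
    (lt_of_le_of_lt (measure_mono h1) (by simp [lt_top_iff_ne_top])).ne
  have hf2 : volume S2 ≠ ⊤ :=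
    (lt_of_le_of_lt (measure_mono h2) (by simp [lt_top_iff_ne_top])).ne
  calc (volume S).toReal ≤ (volume S1 + volume S2).toReal := by
        apply ENNReal.toReal_mono (by simp [hf1, hf2])
        exact le_trans (measure_mono h) (measure_union_le _ _)
    _ = (volume S1).toReal + (volume S2).toReal := ENNReal.toReal_add hf1 hf2

lemma shrink (dd : ℕ) : ∀ (k : ℕ) (I : Fin (dd + k) → Set ℝ), (∀ i, (I i).OrdConnected) →
    ∃ J : Fin dd → Set ℝ, (∀ i, (J i).OrdConnected) ∧ (⋃ i, J i) ⊆ (⋃ i, I i) ∧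
      (volume (((⋃ i, I i) \ ⋃ i, J i) ∩ Set.Icc (0:ℝ) 1)).toReal ≤ k * ((dd:ℝ)+1)⁻¹ := by
  intro k
  induction k with
  | zero =>
    intro I hI
    exact ⟨I, hI, le_rfl, by simp⟩
  | succ k ih =>
    intro I hI
    -- reindex I : Fin (dd + (k+1)) as Fin ((dd+k)+1)
    set I' : Fin (dd + k + 1) → Set ℝ := fun i => I (Fin.cast (by omega) i) with hI'def
    have hI' : ∀ i, (I' i).OrdConnected := fun i => hI _
    have hUI : (⋃ i, I' i) = ⋃ i, I i := by
      apply Set.iUnion_congr_of_surjective (h := fun i : Fin (dd+k+1) => Fin.cast (by omega) i)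
      · exact fun j => ⟨Fin.cast (by omega) j, by simp⟩
      · intro i; rfl
    obtain ⟨i0, hi0⟩ := exists_small (dd + k) I' hI'
    set I'' : Fin (dd + k) → Set ℝ := fun j => I' (i0.succAbove j) with hI''def
    have hI''oc : ∀ j, (I'' j).OrdConnected := fun j => hI' _
    have hsub : (⋃ j, I'' j) ⊆ ⋃ i, I' i := Set.iUnion_subset fun j => Set.subset_iUnion I' _
    have hdiff : ((⋃ i, I' i) \ ⋃ j, I'' j)
        ⊆ ((I' i0 ∩ Set.Icc (0:ℝ) 1) \ ⋃ j ∈ ({i0}ᶜ : Set (Fin (dd+k+1))), I' j) ∪ (Set.Icc 0 1)ᶜ := by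
      intro x hx
      by_cases hxI : x ∈ Set.Icc (0:ℝ) 1
      · left
        obtain ⟨hxi', hnx⟩ := hx
        rw [Set.mem_iUnion] at hxi'
        obtain ⟨i, hi⟩ := hxi'
        simp only [Set.mem_iUnion] at hnx ⊢
        have hnot : ∀ j, j ≠ i0 → x ∉ I' j := by
          intro j hj hxj
          obtain ⟨z, hz⟩ := Fin.exists_succAbove_eq hj
          exact hnx ⟨z, by rw [hI''def]; simp [hz]; exact hxj⟩
        have hii0 : i = i0 := by
          by_contra hne
          exact hnot i hne hi
        refine ⟨⟨hii0 ▸ hi, hxI⟩, ?_⟩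
        simp only [Set.mem_iUnion, not_exists]
        intro j hj
        exact hnot j (by simpa using hj)
      · right; exact hxI
    obtain ⟨J, hJoc, hJsub, hJvol⟩ := ih I'' hI''oc
    refine ⟨J, hJoc, hJsub.trans (hsub.trans hUI.subset), ?_⟩
    push_cast
    have key : ((⋃ i, I i) \ ⋃ i, J i) ∩ Set.Icc (0:ℝ) 1 ⊆
        ((I' i0 ∩ Set.Icc (0:ℝ) 1) \ ⋃ j ∈ ({i0}ᶜ : Set (Fin (dd+k+1))), I' j) ∪
        (((⋃ j, I'' j) \ ⋃ i, J i) ∩ Set.Icc (0:ℝ) 1) := by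
      intro x ⟨⟨hxU, hxJ⟩, hxI⟩
      by_cases hx'' : x ∈ ⋃ j, I'' j
      · right; exact ⟨⟨hx'', hxJ⟩, hxI⟩
      · have : x ∈ (⋃ i, I' i) \ ⋃ j, I'' j := ⟨hUI ▸ hxU, hx''⟩
        rcases hdiff this with h | h
        · left; exact h
        · exact absurd hxI h
    calc (volume (((⋃ i, I i) \ ⋃ i, J i) ∩ Set.Icc (0:ℝ) 1)).toReal
        ≤ (volume ((I' i0 ∩ Set.Icc (0:ℝ) 1) \ ⋃ j ∈ ({i0}ᶜ : Set (Fin (dd+k+1))), I' j)).toReal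
          + (volume (((⋃ j, I'' j) \ ⋃ i, J i) ∩ Set.Icc (0:ℝ) 1)).toReal := by
          apply vol_union_icc key
          · exact fun x hx => hx.1.2
          · exact fun x hx => hx.2
      _ ≤ ((dd:ℝ)+k+1)⁻¹ + k * ((dd:ℝ)+1)⁻¹ := by
          apply add_le_add _ hJvol
          convert hi0 using 2
          · rfl
          · push_cast; ring
      _ ≤ (k+1) * ((dd:ℝ)+1)⁻¹ := by
          have h1 : ((dd:ℝ)+k+1)⁻¹ ≤ ((dd:ℝ)+1)⁻¹ := by
            apply inv_anti₀ (by positivity)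
            have : (0:ℝ) ≤ k := Nat.cast_nonneg k
            linarith
          linarith

lemma pad {n m : ℕ} (hnm : n ≤ m) (I : Fin n → Set ℝ) (hI : ∀ i, (I i).OrdConnected) :
    ∃ J : Fin m → Set ℝ, (∀ i, (J i).OrdConnected) ∧ (⋃ i, J i) = ⋃ i, I i := by
  classical
  refine ⟨fun i => if h : (i : ℕ) < n then I ⟨i, h⟩ else ∅, fun i => ?_, ?_⟩
  · dsimp only; split
    · exact hI _
    · exact Set.ordConnected_empty
  · ext x
    simp only [Set.mem_iUnion]
    constructor
    · rintro ⟨i, hx⟩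
      by_cases h : (i : ℕ) < n
      · exact ⟨⟨i, h⟩, by simpa [h] using hx⟩
      · simp [h] at hx
    · rintro ⟨j, hx⟩
      exact ⟨⟨j, lt_of_lt_of_le j.2 hnm⟩, by simp [j.2]; exact hx⟩

/-- Lemma 5.1 of the paper: `I((1+ε/2)d, α−ε) ⊆ I(d, α)` with respect to the uniform
distribution on `[0,1]`, for `ε ∈ (0,1/2)`, `α ∈ [0,1]` and `d > 2/ε`. -/
theorem unions_of_intervals_reduction (ε α : ℝ) (hε : ε ∈ Set.Ioo (0 : ℝ) (1 / 2))
    (hα : α ∈ Set.Icc (0 : ℝ) 1) (d d' : ℕ) (hd : 2 / ε < (d : ℝ))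
    (hd' : (d' : ℝ) ≤ (1 + ε / 2) * d)
    (f : ℝ → Bool) (hf : Measurable f)
    (hclose : ∃ g : ℝ → Bool, Measurable g ∧ IsUnionIntervals d' (g ⁻¹' {true}) ∧
      distUnif f g ≤ α - ε) :
    ∃ h : ℝ → Bool, Measurable h ∧ IsUnionIntervals d (h ⁻¹' {true}) ∧ distUnif f h ≤ α := by
  classical
  obtain ⟨g, hg, ⟨I0, hI0oc, hI0eq⟩, hdist⟩ := hclose
  set k := d' - d with hk
  have hd'le : d' ≤ d + k := by omega
  obtain ⟨I, hIoc, hIeq⟩ := pad hd'le I0 hI0oc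
  obtain ⟨J, hJoc, hJsub, hJvol⟩ := shrink d k I hIoc
  set U := ⋃ i, J i with hU
  have hUmeas : MeasurableSet U := MeasurableSet.iUnion fun i => (hJoc i).measurableSet
  set A := g ⁻¹' {true} with hA
  have hAU : A = ⋃ i, I i := by rw [hI0eq, ← hIeq]
  have hUA : U ⊆ A := by rw [hAU]; exact hJsub
  refine ⟨fun x => if x ∈ U then true else false, ?_, ⟨J, hJoc, ?_⟩, ?_⟩
  · exact Measurable.ite hUmeas measurable_const measurable_const
  · ext x; simp only [Set.mem_preimage, Set.mem_singleton_iff]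
    by_cases h : x ∈ U <;> simp [h, hU]
  · -- distance bound
    have hε0 : (0:ℝ) < ε := hε.1
    have hd0 : (0:ℝ) < d := lt_trans (div_pos two_pos hε0) hd
    have hkd : (k : ℝ) ≤ ε / 2 * d := by
      rcases le_or_gt d' d with h | h
      · have hk0 : k = 0 := by omega
        rw [hk0]; push_cast; nlinarith
      · have hkc : (k:ℝ) = (d':ℝ) - d := by
          rw [hk]; push_cast [Nat.cast_sub h.le]; ring
        nlinarith
    have hbound : (k:ℝ) * ((d:ℝ)+1)⁻¹ ≤ ε := by
      rw [mul_inv_le_iff₀ (by positivity)]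
      nlinarith
    have htri : distUnif f (fun x => if x ∈ U then true else false) ≤
        distUnif f g + (volume (((⋃ i, I i) \ U) ∩ Set.Icc (0:ℝ) 1)).toReal := by
      unfold distUnif
      apply vol_union_icc
      · intro x ⟨hxI, hxne⟩
        by_cases hfg : f x = g x
        · right
          simp only [hfg] at hxne
          by_cases hxU : x ∈ U
          · have hgx : g x = true := hUA hxU
            exact absurd (by simp [hxU, hgx]) hxne
          · have hgx : g x = true := by
              simp only [hxU, if_false] at hxne
              simpa using hxne
            have hxA : x ∈ A := by
              simp only [hA, Set.mem_preimage, Set.mem_singleton_iff]; exact hgx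
            exact ⟨⟨hAU ▸ hxA, hxU⟩, hxI⟩
        · left; exact ⟨hxI, hfg⟩
      · exact fun x hx => hx.1
      · exact fun x hx => hx.2
    calc distUnif f (fun x => if x ∈ U then true else false)
        ≤ distUnif f g + (volume (((⋃ i, I i) \ U) ∩ Set.Icc (0:ℝ) 1)).toReal := htri
      _ ≤ (α - ε) + (k:ℝ) * ((d:ℝ)+1)⁻¹ := add_le_add hdist hJvol
      _ ≤ α := by linarith
end

section
/- Let d ≥ 1 and m ≥ 1 be natural numbers, and partition [0,1] into the m cells X_1 = [0, 1/m] and X_i = ((i−1)/m, i/m] for 2 ≤ i ≤ m. Let f : ℝ → {0,1} be such that f⁻¹(1) ∩ [0,1] is a union of at most d intervals. Then there exist natural numbers k_1,…,k_m with ∑_{i=1}^m k_i ≤ d + m such that for every i ∈ {1,…,m}, the set f⁻¹(1) ∩ X_i is a union of at most k_i intervals. -/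
open MeasureTheory

/-- The `i`-th cell (zero-based) of the partition of `[0,1]` into `m` pieces:
`X_1 = [0, 1/m]` and `X_i = ((i−1)/m, i/m]` for `2 ≤ i ≤ m`. -/
def cell (m : ℕ) (i : Fin m) : Set ℝ :=
  if (i : ℕ) = 0 then Set.Icc 0 (1 / m)
  else Set.Ioc ((i : ℕ) / m : ℝ) ((((i : ℕ) : ℝ) + 1) / m)

/-- cells with natural index -/
def cellN (m n : ℕ) : Set ℝ :=
  if n = 0 then Set.Icc 0 (1 / m)
  else Set.Ioc ((n : ℝ) / m) (((n : ℝ) + 1) / m)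

lemma cell_eq_cellN (m : ℕ) (i : Fin m) : cell m i = cellN m i.1 := rfl

section cellN
variable {m n : ℕ} {x : ℝ}

lemma cellN_ordConnected : (cellN m n).OrdConnected := by
  unfold cellN; split
  · exact Set.ordConnected_Icc
  · exact Set.ordConnected_Ioc

lemma mem_cellN_le (h : x ∈ cellN m n) : x ≤ ((n : ℝ) + 1) / m := by
  unfold cellN at h; split at h
  · subst ‹n = 0›; simpa using h.2
  · exact h.2

lemma mem_cellN_gt (hn : n ≠ 0) (h : x ∈ cellN m n) : (n : ℝ) / m < x := by
  unfold cellN at h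
  rw [if_neg hn] at h
  exact h.1

lemma cellN_endpoint_mem (hm : 1 ≤ m) : ((n : ℝ) + 1) / m ∈ cellN m n := by
  have hm0 : (0 : ℝ) < m := by exact_mod_cast hm
  unfold cellN; split
  · subst ‹n = 0›
    simp only [Nat.cast_zero, zero_add]
    exact ⟨by positivity, le_refl _⟩
  · exact ⟨(div_lt_div_iff_of_pos_right hm0).mpr (by linarith), le_refl _⟩

lemma cellN_subset_Icc (hm : 1 ≤ m) (hn : n < m) : cellN m n ⊆ Set.Icc 0 1 := by
  have hm0 : (0 : ℝ) < m := by exact_mod_cast hm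
  intro x hx
  constructor
  · unfold cellN at hx; split at hx
    · exact hx.1
    · have : (0:ℝ) ≤ (n : ℝ) / m := by positivity
      linarith [hx.1]
  · have h1 : x ≤ ((n : ℝ) + 1) / m := mem_cellN_le hx
    have h2 : ((n : ℝ) + 1) / m ≤ 1 := by
      rw [div_le_one hm0]
      have : (n : ℝ) + 1 ≤ (m : ℝ) := by exact_mod_cast hn
      linarith
    linarith

/-- betweenness: an order-convex set meeting cells `a` and `c` meets every cell in between -/
lemma meets_between (hm : 1 ≤ m) {I : Set ℝ} (hI : I.OrdConnected) {a b c : ℕ}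
    (hab : a ≤ b) (hbc : b < c)
    (ha : (I ∩ cellN m a).Nonempty) (hc : (I ∩ cellN m c).Nonempty) :
    (I ∩ cellN m b).Nonempty := by
  have hm0 : (0 : ℝ) < m := by exact_mod_cast hm
  obtain ⟨x, hxI, hxa⟩ := ha
  obtain ⟨y, hyI, hyc⟩ := hc
  refine ⟨((b : ℝ) + 1) / m, hI.out hxI hyI ⟨?_, ?_⟩, cellN_endpoint_mem hm⟩
  · calc x ≤ ((a : ℝ) + 1) / m := mem_cellN_le hxa
      _ ≤ ((b : ℝ) + 1) / m := by
        apply (div_le_div_iff_of_pos_right hm0).mpr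
        have : (a : ℝ) ≤ b := by exact_mod_cast hab
        linarith
  · have h1 : ((b : ℝ) + 1) / m ≤ (c : ℝ) / m := by
      apply (div_le_div_iff_of_pos_right hm0).mpr
      exact_mod_cast hbc
    exact (h1.trans_lt (mem_cellN_gt (by omega) hyc)).le

end cellN

lemma isUnionIntervals_cons {n : ℕ} (B : Set ℝ) (hB : B.OrdConnected)
    (g : Fin n → Set ℝ) (hg : ∀ t, (g t).OrdConnected) :
    IsUnionIntervals (n + 1) (B ∪ ⋃ t, g t) := by
  refine ⟨Fin.cons B g, ?_, ?_⟩
  · intro t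
    induction t using Fin.cases with
    | zero => simpa using hB
    | succ t => simpa using hg t
  · ext x
    simp only [Set.mem_union, Set.mem_iUnion, Fin.exists_fin_succ,
      Fin.cons_zero, Fin.cons_succ]

lemma isUnionIntervals_finset {ι : Type*} (s : Finset ι) (g : ι → Set ℝ)
    (hg : ∀ j ∈ s, (g j).OrdConnected) (B : Set ℝ) (hB : B.OrdConnected) :
    IsUnionIntervals (s.card + 1) (B ∪ ⋃ j ∈ s, g j) := by
  have h1 : (⋃ j ∈ s, g j) = ⋃ t : Fin s.card, g (s.equivFin.symm t) := by
    ext x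
    simp only [Set.mem_iUnion, exists_prop]
    constructor
    · rintro ⟨j, hj, hx⟩
      exact ⟨s.equivFin ⟨j, hj⟩, by simpa using hx⟩
    · rintro ⟨t, hx⟩
      exact ⟨(s.equivFin.symm t : ι), (s.equivFin.symm t).2, hx⟩
  rw [h1]
  exact isUnionIntervals_cons B hB _ (fun t => hg _ (s.equivFin.symm t).2)

/-- If `f⁻¹(1) ∩ [0,1]` is a union of at most `d` intervals, then there are
`k_1, …, k_m` with `∑ k_i ≤ d + m` such that `f⁻¹(1) ∩ X_i` is a union of at
most `k_i` intervals for each cell `X_i`.  (The inclusion `I(d,α) ⊆ P(d+m,α)`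
used in the proof of Theorem 5.1.) -/
theorem intervals_into_cells (d m : ℕ) (hd : 1 ≤ d) (hm : 1 ≤ m)
    (f : ℝ → Bool) (hf : IsUnionIntervals d (f ⁻¹' {true} ∩ Set.Icc 0 1)) :
    ∃ k : Fin m → ℕ, (∑ i, k i) ≤ d + m ∧
      ∀ i, IsUnionIntervals (k i) (f ⁻¹' {true} ∩ cell m i) := by
  classical
  obtain ⟨I, hIoc, hIeq⟩ := hf
  set s : Fin m → Finset (Fin d) := fun i =>
    Finset.univ.filter (fun j =>
      (I j ∩ cellN m i.1).Nonempty ∧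
        ¬(1 ≤ i.1 ∧ (I j ∩ cellN m (i.1 - 1)).Nonempty)) with hs
  refine ⟨fun i => (s i).card + 1, ?_, ?_⟩
  · -- counting
    have key : ∀ j : Fin d,
        (Finset.univ.filter (fun i : Fin m => j ∈ s i)).card ≤ 1 := by
      intro j
      rw [Finset.card_le_one]
      intro i hi i' hi'
      simp only [Finset.mem_filter] at hi hi'
      have hmem : ∀ {p q : Fin m}, p.1 < q.1 → j ∈ s p → j ∈ s q → False := by
        intro p q hpq hp hq
        simp only [hs, Finset.mem_filter, Finset.mem_univ, true_and] at hp hq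
        have h1 : 1 ≤ q.1 := by omega
        have h2 : ¬ (I j ∩ cellN m (q.1 - 1)).Nonempty := fun h => hq.2 ⟨h1, h⟩
        exact h2 (meets_between hm (hIoc j) (by omega : p.1 ≤ q.1 - 1) (by omega)
          hp.1 hq.1)
      rcases lt_trichotomy i.1 i'.1 with h | h | h
      · exact (hmem h hi.2 hi'.2).elim
      · exact Fin.ext h
      · exact (hmem h hi'.2 hi.2).elim
    have e1 : ∀ i, (s i).card = ∑ j : Fin d, if j ∈ s i then 1 else 0 := by
      intro i
      rw [← Finset.filter_univ_mem (s i), Finset.card_filter]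
      exact Finset.sum_congr rfl fun j _ => by simp
    have hle : ∑ i : Fin m, (s i).card ≤ d := by
      calc ∑ i : Fin m, (s i).card
          = ∑ j : Fin d, ∑ i : Fin m, (if j ∈ s i then 1 else 0) := by
            simp_rw [e1]; rw [Finset.sum_comm]
        _ = ∑ j : Fin d, (Finset.univ.filter (fun i : Fin m => j ∈ s i)).card := by
            simp_rw [Finset.card_filter]
        _ ≤ ∑ _j : Fin d, 1 := Finset.sum_le_sum (fun j _ => key j)
        _ = d := by simp
    calc ∑ i, ((s i).card + 1) = (∑ i : Fin m, (s i).card) + m := by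
          rw [Finset.sum_add_distrib]; simp
      _ ≤ d + m := by omega
  · intro i
    have hcoc : (cell m i).OrdConnected := by
      rw [cell_eq_cellN]; exact cellN_ordConnected
    have hsub : cell m i ⊆ Set.Icc 0 1 := by
      rw [cell_eq_cellN]; exact cellN_subset_Icc hm i.2
    set T : Finset (Fin d) :=
      Finset.univ.filter (fun j => 1 ≤ i.1 ∧ (I j ∩ cellN m (i.1 - 1)).Nonempty) with hT
    set B : Set ℝ := ⋃ j ∈ T, (I j ∩ cell m i) with hB
    have hBoc : B.OrdConnected := by
      constructor
      intro x hx y hy z hz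
      simp only [hB, Set.mem_iUnion, exists_prop] at hx hy ⊢
      obtain ⟨jx, hjx, hxm⟩ := hx
      obtain ⟨jy, hjy, hym⟩ := hy
      have hjy' := hjy
      simp only [hT, Finset.mem_filter, Finset.mem_univ, true_and] at hjy'
      obtain ⟨hi1, w, hwI, hwc⟩ := hjy'
      have hwle : w ≤ (i.1 : ℝ) / m := by
        have h := mem_cellN_le hwc
        have hcast : ((i.1 - 1 : ℕ) : ℝ) + 1 = (i.1 : ℝ) := by
          have : (i.1 - 1) + 1 = i.1 := by omega
          exact_mod_cast this
        rwa [hcast] at h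
      have hxgt : (i.1 : ℝ) / m < x := by
        have h := hxm.2
        rw [cell_eq_cellN] at h
        exact mem_cellN_gt (by omega) h
      have hzI : z ∈ I jy :=
        (hIoc jy).out hwI hym.1 ⟨hwle.trans (hxgt.le.trans hz.1), hz.2⟩
      have hzc : z ∈ cell m i := hcoc.out hxm.2 hym.2 hz
      exact ⟨jy, hjy, hzI, hzc⟩
    have hIsub : ∀ j, I j ⊆ f ⁻¹' {true} ∩ Set.Icc 0 1 := by
      intro j
      rw [hIeq]
      exact Set.subset_iUnion I j
    have hdec : f ⁻¹' {true} ∩ cell m i = B ∪ ⋃ j ∈ s i, (I j ∩ cell m i) := by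
      ext x
      constructor
      · rintro ⟨hfx, hcx⟩
        have hx1 : x ∈ ⋃ j, I j := by rw [← hIeq]; exact ⟨hfx, hsub hcx⟩
        obtain ⟨j, hj⟩ := Set.mem_iUnion.mp hx1
        by_cases hjT : j ∈ T
        · exact Or.inl (Set.mem_biUnion hjT ⟨hj, hcx⟩)
        · refine Or.inr (Set.mem_biUnion ?_ ⟨hj, hcx⟩)
          have hcx' : x ∈ cellN m i.1 := by rwa [cell_eq_cellN] at hcx
          have hjT' : ¬(1 ≤ i.1 ∧ (I j ∩ cellN m (i.1 - 1)).Nonempty) := by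
            intro hc
            exact hjT (Finset.mem_filter.mpr ⟨Finset.mem_univ _, hc⟩)
          exact Finset.mem_filter.mpr ⟨Finset.mem_univ _, ⟨x, hj, hcx'⟩, hjT'⟩
      · rintro (hx | hx)
        · obtain ⟨j, -, hjx, hcx⟩ := Set.mem_iUnion₂.mp hx
          exact ⟨(hIsub j hjx).1, hcx⟩
        · obtain ⟨j, -, hjx, hcx⟩ := Set.mem_iUnion₂.mp hx
          exact ⟨(hIsub j hjx).1, hcx⟩
    rw [hdec]
    exact isUnionIntervals_finset (s i) _
      (fun j _ => (hIoc j).inter hcoc) B hBoc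
end

section
/- Let k_1 ≤ k_2 be positive integers and let e_1,…,e_{k_2} be real numbers, each lying in [0,1]. Then |(1/k_1)·∑_{i=1}^{k_1} e_i − (1/k_2)·∑_{i=1}^{k_2} e_i| ≤ 1 − k_1/k_2. -/
/-- Core deterministic inequality of Lemma 6.1: for `[0,1]`-valued `e_1, …, e_{k_2}` and
`k_1 ≤ k_2`, the averages of the first `k_1` and of all `k_2` values differ by at most
`1 − k_1/k_2`. -/
theorem average_prefix_diff (k₁ k₂ : ℕ) (hk₁ : 1 ≤ k₁) (hk : k₁ ≤ k₂)
    (e : ℕ → ℝ) (he : ∀ i < k₂, e i ∈ Set.Icc (0 : ℝ) 1) :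
    |(1 / (k₁ : ℝ)) * ∑ i ∈ Finset.range k₁, e i -
      (1 / (k₂ : ℝ)) * ∑ i ∈ Finset.range k₂, e i| ≤ 1 - (k₁ : ℝ) / k₂ := by
  have hk1 : (0:ℝ) < k₁ := by exact_mod_cast hk₁
  have hkk : (k₁:ℝ) ≤ k₂ := by exact_mod_cast hk
  have hk2 : (0:ℝ) < k₂ := lt_of_lt_of_le hk1 hkk
  set S := ∑ i ∈ Finset.range k₁, e i with hS
  set T := ∑ i ∈ Finset.Ico k₁ k₂, e i with hT
  have hsplit : ∑ i ∈ Finset.range k₂, e i = S + T := by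
    exact (Finset.sum_range_add_sum_Ico e hk).symm
  have hS0 : 0 ≤ S := Finset.sum_nonneg fun i hi =>
    (he i (lt_of_lt_of_le (Finset.mem_range.mp hi) hk)).1
  have hS1 : S ≤ k₁ := by
    calc S ≤ ∑ _i ∈ Finset.range k₁, (1:ℝ) := Finset.sum_le_sum fun i hi =>
          (he i (lt_of_lt_of_le (Finset.mem_range.mp hi) hk)).2
    _ = k₁ := by simp
  have hT0 : 0 ≤ T := Finset.sum_nonneg fun i hi =>
    (he i (Finset.mem_Ico.mp hi).2).1
  have hT1 : T ≤ (k₂:ℝ) - k₁ := by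
    calc T ≤ ∑ _i ∈ Finset.Ico k₁ k₂, (1:ℝ) := Finset.sum_le_sum fun i hi =>
          (he i (Finset.mem_Ico.mp hi).2).2
    _ = (k₂:ℝ) - k₁ := by
        rw [Finset.sum_const, Nat.card_Ico, nsmul_eq_mul, mul_one]; push_cast [hk]; ring
  have key : |(k₂:ℝ) * S - k₁ * (S + T)| ≤ k₁ * k₂ - k₁ * k₁ := by
    rw [abs_le]
    constructor
    · nlinarith [mul_nonneg hk1.le (sub_nonneg.mpr hT1), mul_nonneg (sub_nonneg.mpr hkk) hS0]
    · nlinarith [mul_nonneg (sub_nonneg.mpr hkk) (sub_nonneg.mpr hS1), mul_nonneg hk1.le hT0]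
  have heq : 1/(k₁:ℝ) * S - 1/k₂ * (S + T) = ((k₂:ℝ) * S - k₁ * (S + T)) / (k₁ * k₂) := by
    field_simp
  rw [hsplit, heq, abs_div, abs_of_pos (mul_pos hk1 hk2), div_le_iff₀ (mul_pos hk1 hk2)]
  have : (1 - (k₁:ℝ)/k₂) * (k₁ * k₂) = k₁ * k₂ - k₁ * k₁ := by
    field_simp
  rw [this]
  exact key
end

section
/- Let (Ω, μ) be a probability space, let k_1 ≤ k_2 be positive integers, let e_1,…,e_{k_2} : Ω → ℝ be measurable random variables each taking values in [0,1], let L ≥ 0, and let loss : ℝ → ℝ be L-Lipschitz. Then |E[loss((1/k_1)·∑_{i=1}^{k_1} e_i)] − E[loss((1/k_2)·∑_{i=1}^{k_2} e_i)]| ≤ L·(1 − k_1/k_2), where E denotes expectation (integral) with respect to μ. -/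
open MeasureTheory

/-- Lemma 6.1 of the paper: if `loss` is `L`-Lipschitz and the `e_i` are `[0,1]`-valued
random variables, then the expected losses of the averages of the first `k₁` and of all
`k₂` of them differ by at most `L·(1 − k₁/k₂)`. -/
theorem knn_loss_change {Ω : Type*} [MeasurableSpace Ω] (μ : Measure Ω)
    [IsProbabilityMeasure μ]
    (k₁ k₂ : ℕ) (hk₁ : 1 ≤ k₁) (hk : k₁ ≤ k₂)
    (e : ℕ → Ω → ℝ) (hmeas : ∀ i, Measurable (e i))
    (hrange : ∀ i < k₂, ∀ ω, e i ω ∈ Set.Icc (0 : ℝ) 1)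
    (L : ℝ) (hL : 0 ≤ L) (loss : ℝ → ℝ)
    (hLip : ∀ x y : ℝ, |loss x - loss y| ≤ L * |x - y|) :
    |(∫ ω, loss ((1 / (k₁ : ℝ)) * ∑ i ∈ Finset.range k₁, e i ω) ∂μ) -
      (∫ ω, loss ((1 / (k₂ : ℝ)) * ∑ i ∈ Finset.range k₂, e i ω) ∂μ)|
      ≤ L * (1 - (k₁ : ℝ) / k₂) := by
  have hk₁pos : (0:ℝ) < k₁ := by exact_mod_cast hk₁
  have hk₂pos : (0:ℝ) < k₂ := lt_of_lt_of_le hk₁pos (by exact_mod_cast hk)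
  set a : Ω → ℝ := fun ω => (1 / (k₁ : ℝ)) * ∑ i ∈ Finset.range k₁, e i ω with ha
  set b : Ω → ℝ := fun ω => (1 / (k₂ : ℝ)) * ∑ i ∈ Finset.range k₂, e i ω with hb
  -- pointwise bound on |a - b|
  have key : ∀ ω, |a ω - b ω| ≤ 1 - (k₁ : ℝ) / k₂ := by
    intro ω
    set s : ℝ := ∑ i ∈ Finset.range k₁, e i ω with hs
    set t : ℝ := ∑ i ∈ Finset.Ico k₁ k₂, e i ω with ht
    have hsplit : ∑ i ∈ Finset.range k₂, e i ω = s + t := by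
      simp only [hs, ht, Finset.range_eq_Ico]
      exact (Finset.sum_Ico_consecutive _ (Nat.zero_le k₁) hk).symm
    have hs0 : 0 ≤ s := Finset.sum_nonneg fun i hi =>
      (hrange i (lt_of_lt_of_le (Finset.mem_range.mp hi) hk) ω).1
    have hs1 : s ≤ (k₁ : ℝ) := by
      calc s ≤ ∑ i ∈ Finset.range k₁, (1:ℝ) := Finset.sum_le_sum fun i hi =>
              (hrange i (lt_of_lt_of_le (Finset.mem_range.mp hi) hk) ω).2
        _ = (k₁ : ℝ) := by simp
    have ht0 : 0 ≤ t := Finset.sum_nonneg fun i hi =>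
      (hrange i (Finset.mem_Ico.mp hi).2 ω).1
    have ht1 : t ≤ (k₂ : ℝ) - k₁ := by
      calc t ≤ ∑ i ∈ Finset.Ico k₁ k₂, (1:ℝ) := Finset.sum_le_sum fun i hi =>
              (hrange i (Finset.mem_Ico.mp hi).2 ω).2
        _ = (k₂ : ℝ) - k₁ := by
          rw [Finset.sum_const, Nat.card_Ico, nsmul_eq_mul, Nat.cast_sub hk, mul_one]
    have hk' : (k₁:ℝ) ≤ k₂ := by exact_mod_cast hk
    have heq : a ω - b ω = (s * ↑k₂ - (s + t) * ↑k₁) / (↑k₁ * ↑k₂) := by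
      simp only [ha, hb, hsplit, hs]
      field_simp
    rw [heq, abs_div, abs_of_pos (mul_pos hk₁pos hk₂pos),
      div_le_iff₀ (mul_pos hk₁pos hk₂pos)]
    have hrhs : (1 - (k₁:ℝ)/k₂) * (↑k₁ * ↑k₂) = ↑k₁ * ↑k₂ - ↑k₁ * ↑k₁ := by
      field_simp
    rw [hrhs, abs_le]
    constructor
    · nlinarith [mul_le_mul_of_nonneg_right ht1 hk₁pos.le,
        mul_nonneg hs0 (sub_nonneg.mpr hk')]
    · nlinarith [mul_nonneg ht0 hk₁pos.le,
        mul_le_mul_of_nonneg_right hs1 (sub_nonneg.mpr hk')]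
  -- measurability and integrability
  have hcont : Continuous loss := by
    have : LipschitzWith ⟨L, hL⟩ loss := by
      apply LipschitzWith.of_dist_le_mul
      intro x y
      rw [Real.dist_eq, Real.dist_eq]; exact hLip x y
    exact this.continuous
  have hma : Measurable a := by
    apply Measurable.const_mul
    exact Finset.measurable_sum _ fun i _ => hmeas i
  have hmb : Measurable b := by
    apply Measurable.const_mul
    exact Finset.measurable_sum _ fun i _ => hmeas i
  have habd : ∀ ω, |a ω| ≤ 1 := by
    intro ω
    have hs0 : 0 ≤ ∑ i ∈ Finset.range k₁, e i ω := Finset.sum_nonneg fun i hi =>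
      (hrange i (lt_of_lt_of_le (Finset.mem_range.mp hi) hk) ω).1
    have hs1 : ∑ i ∈ Finset.range k₁, e i ω ≤ (k₁ : ℝ) := by
      calc _ ≤ ∑ i ∈ Finset.range k₁, (1:ℝ) := Finset.sum_le_sum fun i hi =>
              (hrange i (lt_of_lt_of_le (Finset.mem_range.mp hi) hk) ω).2
        _ = (k₁ : ℝ) := by simp
    rw [abs_le]
    constructor
    · have : (0:ℝ) ≤ a ω := mul_nonneg (by positivity) hs0
      linarith
    · simp only [ha]
      rw [one_div, inv_mul_le_iff₀ hk₁pos, mul_one]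
      exact hs1
  have hbbd : ∀ ω, |b ω| ≤ 1 := by
    intro ω
    have hs0 : 0 ≤ ∑ i ∈ Finset.range k₂, e i ω := Finset.sum_nonneg fun i hi =>
      (hrange i (Finset.mem_range.mp hi) ω).1
    have hs1 : ∑ i ∈ Finset.range k₂, e i ω ≤ (k₂ : ℝ) := by
      calc _ ≤ ∑ i ∈ Finset.range k₂, (1:ℝ) := Finset.sum_le_sum fun i hi =>
              (hrange i (Finset.mem_range.mp hi) ω).2
        _ = (k₂ : ℝ) := by simp
    rw [abs_le]
    constructor
    · have : (0:ℝ) ≤ b ω := mul_nonneg (by positivity) hs0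
      linarith
    · simp only [hb]
      rw [one_div, inv_mul_le_iff₀ hk₂pos, mul_one]
      exact hs1
  have hlossbd : ∀ x : ℝ, |x| ≤ 1 → |loss x| ≤ |loss 0| + L := by
    intro x hx
    calc |loss x| ≤ |loss x - loss 0| + |loss 0| := by
          simpa using abs_add_le (loss x - loss 0) (loss 0)
      _ ≤ L * |x - 0| + |loss 0| := by gcongr; exact hLip x 0
      _ ≤ L * 1 + |loss 0| := by gcongr; simpa using hx
      _ = |loss 0| + L := by ring
  have hia : Integrable (fun ω => loss (a ω)) μ := by
    apply Integrable.mono' (integrable_const (|loss 0| + L))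
      ((hcont.measurable.comp hma).aestronglyMeasurable)
    filter_upwards with ω
    simpa using hlossbd _ (habd ω)
  have hib : Integrable (fun ω => loss (b ω)) μ := by
    apply Integrable.mono' (integrable_const (|loss 0| + L))
      ((hcont.measurable.comp hmb).aestronglyMeasurable)
    filter_upwards with ω
    simpa using hlossbd _ (hbbd ω)
  calc |(∫ ω, loss (a ω) ∂μ) - ∫ ω, loss (b ω) ∂μ|
      = |∫ ω, (loss (a ω) - loss (b ω)) ∂μ| := by rw [integral_sub hia hib]
    _ ≤ ∫ ω, |loss (a ω) - loss (b ω)| ∂μ := by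
        simpa using norm_integral_le_integral_norm (fun ω => loss (a ω) - loss (b ω))
    _ ≤ ∫ _ω, L * (1 - (k₁ : ℝ) / k₂) ∂μ := by
        apply integral_mono ((hia.sub hib).abs) (integrable_const _)
        intro ω
        calc |loss (a ω) - loss (b ω)| ≤ L * |a ω - b ω| := hLip _ _
          _ ≤ L * (1 - (k₁ : ℝ) / k₂) := by gcongr; exact key ω
    _ = L * (1 - (k₁ : ℝ) / k₂) := by simp
end

section
/- Let N ≥ 1 be an integer, let p ≥ 1 be a real number, let ε ∈ (0,1), and set r = p/(p − ε/3) > 1. Let g : {1,…,N} → ℝ satisfy |g(k_1) − g(k_2)| ≤ p·(1 − k_1/k_2) for all integers 1 ≤ k_1 ≤ k_2 ≤ N. Then for every k ∈ {1,…,N} there exists a natural number i such that ⌈r^i⌉ ≤ k and |g(⌈r^i⌉) − g(k)| ≤ ε/3. Consequently, the minimum of g over the grid {⌈r^i⌉ : i ∈ ℕ, ⌈r^i⌉ ≤ N} is at most min_{1 ≤ k ≤ N} g(k) + ε/3. -/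
/-- The grid-search argument of Theorem 6.2: if `g` satisfies the Lipschitz-like bound
`|g(k₁) − g(k₂)| ≤ p·(1 − k₁/k₂)` on `{1,…,N}`, then every `k ∈ {1,…,N}` is `ε/3`-approximated
by some grid point `⌈r^i⌉ ≤ k` with `r = p/(p − ε/3)`; consequently the minimum of `g` over the
grid `{⌈r^i⌉ : ⌈r^i⌉ ≤ N}` is within `ε/3` of the true minimum of `g` over `{1,…,N}`. -/
theorem grid_search_knn (N : ℕ) (hN : 1 ≤ N) (p ε r : ℝ) (hp : 1 ≤ p)
    (hε : ε ∈ Set.Ioo (0 : ℝ) 1) (hr : r = p / (p - ε / 3))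
    (g : ℕ → ℝ)
    (hg : ∀ k₁ k₂ : ℕ, 1 ≤ k₁ → k₁ ≤ k₂ → k₂ ≤ N →
      |g k₁ - g k₂| ≤ p * (1 - (k₁ : ℝ) / k₂)) :
    (∀ k : ℕ, 1 ≤ k → k ≤ N →
      ∃ i : ℕ, ⌈r ^ i⌉₊ ≤ k ∧ |g ⌈r ^ i⌉₊ - g k| ≤ ε / 3) ∧
    (∀ k : ℕ, 1 ≤ k → k ≤ N →
      ∃ i : ℕ, ⌈r ^ i⌉₊ ≤ N ∧ g ⌈r ^ i⌉₊ ≤ g k + ε / 3) := by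
  obtain ⟨hε0, hε1⟩ := hε
  have hd : 0 < p - ε / 3 := by linarith
  have hp0 : 0 < p := by linarith
  have hr1 : 1 < r := by rw [hr, lt_div_iff₀ hd]; linarith
  have hr0 : 0 < r := lt_trans one_pos hr1
  have main : ∀ k : ℕ, 1 ≤ k → k ≤ N →
      ∃ i : ℕ, ⌈r ^ i⌉₊ ≤ k ∧ |g ⌈r ^ i⌉₊ - g k| ≤ ε / 3 := by
    intro k hk1 hkN
    have hex : ∃ j, k < ⌈r ^ j⌉₊ := by
      obtain ⟨j, hj⟩ := pow_unbounded_of_one_lt (k : ℝ) hr1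
      exact ⟨j, Nat.lt_ceil.mpr hj⟩
    have hjspec : k < ⌈r ^ Nat.find hex⌉₊ := Nat.find_spec hex
    have hj0 : Nat.find hex ≠ 0 := by
      intro h
      rw [h] at hjspec
      simp [pow_zero, Nat.ceil_one] at hjspec
      omega
    obtain ⟨i, hji⟩ : ∃ i, Nat.find hex = i + 1 := ⟨Nat.find hex - 1, by omega⟩
    rw [hji] at hjspec
    have hik : ⌈r ^ i⌉₊ ≤ k := by
      have := Nat.find_min hex (m := i) (by omega)
      omega
    refine ⟨i, hik, ?_⟩
    set m := ⌈r ^ i⌉₊ with hm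
    have hm1 : 1 ≤ m := Nat.one_le_ceil_iff.mpr (pow_pos hr0 i)
    have hbound := hg m k hm1 hik hkN
    refine hbound.trans ?_
    -- k < r^(i+1) = r * r^i ≤ r * m
    have hk_lt : (k : ℝ) < r ^ (i + 1) := Nat.lt_ceil.mp hjspec
    have hrm : (r : ℝ) ^ i ≤ (m : ℝ) := Nat.le_ceil _
    have hkr : (k : ℝ) < r * m := by
      calc (k : ℝ) < r ^ (i + 1) := hk_lt
        _ = r * r ^ i := by ring
        _ ≤ r * m := by nlinarith
    -- hence k * (p - ε/3) < p * m
    have hkey : (k : ℝ) * (p - ε / 3) < p * m := by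
      rw [hr] at hkr
      rw [div_mul_eq_mul_div, lt_div_iff₀ hd] at hkr
      nlinarith
    have hk0 : (0 : ℝ) < k := by exact_mod_cast hk1
    have h1 : p * (1 - (m : ℝ) / k) = (p * k - p * m) / k := by
      field_simp
    rw [h1, div_le_iff₀ hk0]
    nlinarith
  refine ⟨main, fun k hk1 hkN => ?_⟩
  obtain ⟨i, hik, habs⟩ := main k hk1 hkN
  exact ⟨i, hik.trans hkN, by
    have := abs_le.mp habs
    linarith [this.1]⟩
end

section
/- For all real numbers p ≥ 1 and ε ∈ (0,1), the binary relative entropy satisfies D((1−ε)/(2p), 1/(2p)) ≤ ε²/p, where D(x,y) = x·log(x/y) + (1−x)·log((1−x)/(1−y)). -/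
/-- The key KL-divergence estimate in the proof of Theorem 6.3:
`D((1−ε)/(2p), 1/(2p)) ≤ ε²/p`, where `D(x,y) = x·log(x/y) + (1−x)·log((1−x)/(1−y))`
is the binary relative entropy (natural logarithms). -/
theorem kl_div_bound (p ε : ℝ) (hp : 1 ≤ p) (hε : ε ∈ Set.Ioo (0 : ℝ) 1) :
    (1 - ε) / (2 * p) * Real.log (((1 - ε) / (2 * p)) / (1 / (2 * p))) +
      (1 - (1 - ε) / (2 * p)) * Real.log ((1 - (1 - ε) / (2 * p)) / (1 - 1 / (2 * p)))
      ≤ ε ^ 2 / p := by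
  obtain ⟨hε0, hε1⟩ := hε
  have hp0 : (0:ℝ) < p := by linarith
  have h2p : (0:ℝ) < 2 * p := by linarith
  have h2p1 : (0:ℝ) < 2 * p - 1 := by linarith
  have hx : ((1 - ε) / (2 * p)) / (1 / (2 * p)) = 1 - ε := by field_simp
  have hy : (1 - (1 - ε) / (2 * p)) / (1 - 1 / (2 * p)) = 1 + ε / (2 * p - 1) := by
    rw [div_eq_iff (by intro h; rw [sub_eq_zero] at h; field_simp at h; linarith :
      (1 - 1 / (2 * p)) ≠ 0)]
    field_simp
    ring
  rw [hx, hy]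
  have h1 : Real.log (1 - ε) ≤ -ε := by
    have := Real.log_le_sub_one_of_pos (by linarith : (0:ℝ) < 1 - ε)
    linarith
  have h2 : Real.log (1 + ε / (2 * p - 1)) ≤ ε / (2 * p - 1) := by
    have := Real.log_le_sub_one_of_pos (by positivity : (0:ℝ) < 1 + ε / (2 * p - 1))
    linarith
  have ha : (0:ℝ) ≤ (1 - ε) / (2 * p) := by
    apply div_nonneg <;> linarith
  have hb : (0:ℝ) ≤ 1 - (1 - ε) / (2 * p) := by
    have : (1 - ε) / (2 * p) < 1 := by
      rw [div_lt_one h2p]; linarith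
    linarith
  have t1 := mul_le_mul_of_nonneg_left h1 ha
  have t2 := mul_le_mul_of_nonneg_left h2 hb
  have hsum : (1 - ε) / (2 * p) * (-ε) + (1 - (1 - ε) / (2 * p)) * (ε / (2 * p - 1))
      = ε ^ 2 / (2 * p - 1) := by
    field_simp
    ring
  have hfinal : ε ^ 2 / (2 * p - 1) ≤ ε ^ 2 / p := by
    rw [div_le_div_iff₀ h2p1 hp0]
    nlinarith [sq_nonneg ε]
  linarith
end

section
/- Let p ≥ 1 be an integer and let ε ∈ (0, 1/(6√e)). Set ε' = 6√e·ε. Then (1 − (1−ε')/(2p))^p − (1 − 1/(2p))^p > 3ε. -/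
/-- The separation inequality used in the proof of Theorem 6.3: for integer `p ≥ 1`,
`ε ∈ (0, 1/(6√e))` and `ε' = 6√e·ε`, the `p`-th power losses arising from coins of means
`(1−ε')/(2p)` and `1/(2p)` are separated by more than `3ε`. -/
theorem pth_power_loss_separation (p : ℕ) (hp : 1 ≤ p) (ε : ℝ) (hε : 0 < ε)
    (hε' : ε < 1 / (6 * Real.sqrt (Real.exp 1))) :
    3 * ε <
      (1 - (1 - 6 * Real.sqrt (Real.exp 1) * ε) / (2 * (p : ℝ))) ^ p -
        (1 - 1 / (2 * (p : ℝ))) ^ p := by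
  have hsq : Real.sqrt (Real.exp 1) = Real.exp (1/2) := by
    rw [show Real.exp 1 = Real.exp (1/2) * Real.exp (1/2) by
      rw [← Real.exp_add]; norm_num, Real.sqrt_mul_self (Real.exp_pos _).le]
  rw [hsq]
  set c := Real.exp (1/2) with hc
  have hc0 : 0 < c := Real.exp_pos _
  have hc1 : 1 < c := by
    have := Real.add_one_le_exp (1/2); rw [← hc] at this; linarith
  have hq : (1:ℝ) ≤ (p:ℝ) := by exact_mod_cast hp
  have hq0 : (0:ℝ) < (p:ℝ) := by linarith
  set a : ℝ := 1 - 1/(2*(p:ℝ)) with ha_def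
  have hhalf : 1/(2*(p:ℝ)) ≤ 1/2 := by
    rw [div_le_div_iff₀ (by linarith) (by norm_num)]; linarith
  have ha : (0:ℝ) < a := by rw [ha_def]; linarith
  set δ : ℝ := 6 * c * ε / (2*(p:ℝ)) with hδ_def
  have hδ : 0 < δ := by positivity
  have hrw : 1 - (1 - 6*c*ε)/(2*(p:ℝ)) = a + δ := by
    rw [ha_def, hδ_def]; field_simp; ring
  rw [hrw]
  -- Bernoulli: a^p + p * a^(p-1) * δ ≤ (a+δ)^p
  have hpow : a ^ p = a ^ (p-1) * a := by
    rw [← pow_succ]; congr 1; omega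
  have hbern : a^p + (p:ℝ) * a^(p-1) * δ ≤ (a+δ)^p := by
    have ht : (0:ℝ) ≤ δ / a := by positivity
    have h := one_add_mul_le_pow (a := δ/a) (by linarith) p
    have h2 : a^p * (1 + (p:ℝ) * (δ/a)) ≤ a^p * (1 + δ/a)^p :=
      mul_le_mul_of_nonneg_left h (by positivity)
    have h3 : a^p * (1 + δ/a)^p = (a + δ)^p := by
      rw [← mul_pow]; congr 1; field_simp
    have h4 : a^p * (1 + (p:ℝ) * (δ/a)) = a^p + (p:ℝ) * a^(p-1) * δ := by
      rw [hpow]; field_simp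
    linarith [h2.trans_eq h3, h4 ▸ h2]
  -- key: c⁻¹ < a^(p-1)
  have hkey : c⁻¹ < a ^ (p-1) := by
    rcases Nat.lt_or_ge p 2 with hp2 | hp2
    · interval_cases p
      · simp; rw [← Real.exp_neg, ← Real.exp_zero]
        exact Real.exp_lt_exp.mpr (by norm_num)
    · have h2p : (2:ℝ) ≤ (p:ℝ) := by exact_mod_cast hp2
      have hd : (0:ℝ) < 2*(p:ℝ) - 1 := by linarith
      have h1 : Real.exp (-(1/(2*(p:ℝ)-1))) ≤ a := by
        have hle := Real.add_one_le_exp (1/(2*(p:ℝ)-1))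
        have hkey : a * (1/(2*(p:ℝ)-1)+1) = 1 := by
          rw [ha_def]; field_simp; ring
        have hpos := Real.exp_pos (1/(2*(p:ℝ)-1))
        rw [Real.exp_neg, inv_le_iff_one_le_mul₀ hpos]
        nlinarith
      have h2 : Real.exp (-(1/(2*(p:ℝ)-1))) ^ (p-1) ≤ a ^ (p-1) :=
        pow_le_pow_left₀ (Real.exp_pos _).le h1 _
      have h3 : c⁻¹ < Real.exp (-(1/(2*(p:ℝ)-1))) ^ (p-1) := by
        rw [← Real.exp_nat_mul, hc, ← Real.exp_neg]
        apply Real.exp_lt_exp.mpr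
        have hcast : ((p-1 : ℕ) : ℝ) = (p:ℝ) - 1 := by
          rw [Nat.cast_sub hp]; norm_num
        rw [hcast, show ((p:ℝ)-1) * -(1/(2*(p:ℝ)-1)) = -(((p:ℝ)-1)/(2*(p:ℝ)-1)) by ring,
          neg_lt_neg_iff, div_lt_div_iff₀ hd (by norm_num)]
        linarith
      exact h3.trans_le h2
  -- assemble
  have hfin : 3 * ε < (p:ℝ) * a^(p-1) * δ := by
    have : (p:ℝ) * a^(p-1) * δ = 3 * c * ε * a^(p-1) := by
      rw [hδ_def]; field_simp; ring
    rw [this]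
    calc 3 * ε = 3 * c * ε * c⁻¹ := by field_simp
      _ < 3 * c * ε * a^(p-1) := by
          apply mul_lt_mul_of_pos_left hkey; positivity
  linarith
end
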